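/- Let M ≥ 1, let N : Fin M → Fin M → Fin M → ℕ with marginals N_{i,j} := ∑_{k'} N_{i,j,k'}, and let W^M, W^V be fixed real M×M matrices. For a real M×M matrix T, set A(T) := W^M · T, B(T) := W^V · T, P̂_{i,j}(k')(T) := exp(A(T)_{i,k'} + B(T)_{j,k'}) / ∑_ℓ exp(A(T)_{i,ℓ} + B(T)_{j,ℓ}), and ℓ(T) := -∑_{i,j,k'} N_{i,j,k'} · log P̂_{i,j}(k')(T). Then for every pair of indices (d, k'), the partial derivative of ℓ with respect to the (d,k') entry of T, evaluated at T = W^T (i.e., the derivative at s = 0 of s ↦ ℓ(W^T + s·E_{d,k'}) where E_{d,k'} is the matrix unit), equals ∑_{i,j} ( N_{i,j} · P̂_{i,j}(k')(W^T) − N_{i,j,k'} ) · ( W^M_{i,d} + W^V_{j,d} ). -/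

import Mathlib

open Finset

/-- Softmax probability of predicting `k'` two steps ahead given current node `i`
and target `j`, for backbone matrices `WM, WV` and transfer matrix `T`. -/
noncomputable def Phat {M : ℕ} (WM WV T : Matrix (Fin M) (Fin M) ℝ)
    (i j k' : Fin M) : ℝ :=
  Real.exp ((WM * T) i k' + (WV * T) j k') /
    ∑ l : Fin M, Real.exp ((WM * T) i l + (WV * T) j l)

/-- Second-step cross-entropy loss as a function of the transfer matrix `T`. -/
noncomputable def secondStepLoss {M : ℕ} (N : Fin M → Fin M → Fin M → ℕ)
    (WM WV T : Matrix (Fin M) (Fin M) ℝ) : ℝ :=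
  -(∑ i : Fin M, ∑ j : Fin M, ∑ k' : Fin M, (N i j k' : ℝ) *
      Real.log (Phat WM WV T i j k'))

/-- The partial derivative of the second-step loss with respect to the
`(d,k')` entry of the transfer matrix, evaluated at `W^T`, equals
`∑_{i,j} (N_{i,j} · P̂_{i,j}(k') − N_{i,j,k'}) · (W^M_{i,d} + W^V_{j,d})`. -/
theorem secondStep_loss_grad_transfer
    (M : ℕ) (hM : 1 ≤ M) (N : Fin M → Fin M → Fin M → ℕ)
    (WM WV WT : Matrix (Fin M) (Fin M) ℝ) (d k' : Fin M) :
    deriv (fun s : ℝ =>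
        secondStepLoss N WM WV (WT + s • Matrix.single d k' (1 : ℝ))) 0
      = ∑ i : Fin M, ∑ j : Fin M,
          (((∑ k'' : Fin M, N i j k'' : ℕ) : ℝ) * Phat WM WV WT i j k'
            - (N i j k' : ℝ)) * (WM i d + WV j d) := by
  haveI : Nonempty (Fin M) := ⟨⟨0, hM⟩⟩
  set E : Matrix (Fin M) (Fin M) ℝ := Matrix.single d k' (1:ℝ) with hE
  set c : Fin M → Fin M → Fin M → ℝ := fun i j l => (WM * WT) i l + (WV * WT) j l with hc
  set u : Fin M → Fin M → Fin M → ℝ := fun i j l => (WM * E) i l + (WV * E) j l with hu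
  have hentry : ∀ (s : ℝ) (i j l : Fin M),
      (WM * (WT + s • E)) i l + (WV * (WT + s • E)) j l = c i j l + s * u i j l := by
    intro s i j l
    simp only [Matrix.mul_add, Matrix.mul_smul, Matrix.add_apply, Matrix.smul_apply,
      smul_eq_mul, hc, hu]
    ring
  have huval : ∀ i j l, u i j l = if l = k' then WM i d + WV j d else 0 := by
    intro i j l
    by_cases hl : l = k'
    · subst hl
      simp [hu, hE, Matrix.mul_single_apply_same]
    · rw [hu]
      simp only [hE]
      rw [Matrix.mul_single_apply_of_ne (i := d) (j := k') (c := (1:ℝ)) (a := i) (b := l) (hbj := hl) (M := WM),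
        Matrix.mul_single_apply_of_ne (i := d) (j := k') (c := (1:ℝ)) (a := j) (b := l) (hbj := hl) (M := WV)]
      simp [hl]
  have hZpos : ∀ (s : ℝ) (i j : Fin M),
      0 < ∑ l : Fin M, Real.exp (c i j l + s * u i j l) :=
    fun s i j => Finset.sum_pos (fun l _ => Real.exp_pos _) Finset.univ_nonempty
  have hZpos0 : ∀ i j : Fin M, 0 < ∑ l : Fin M, Real.exp (c i j l) :=
    fun i j => Finset.sum_pos (fun l _ => Real.exp_pos _) Finset.univ_nonempty
  have hfun : (fun s : ℝ => secondStepLoss N WM WV (WT + s • E)) =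
      fun s : ℝ => -(∑ i : Fin M, ∑ j : Fin M, ∑ k'' : Fin M, (N i j k'' : ℝ) *
        ((c i j k'' + s * u i j k'') -
          Real.log (∑ l : Fin M, Real.exp (c i j l + s * u i j l)))) := by
    funext s
    unfold secondStepLoss Phat
    congr 1
    refine Finset.sum_congr rfl fun i _ => Finset.sum_congr rfl fun j _ =>
      Finset.sum_congr rfl fun k'' _ => ?_
    simp only [hentry s]
    rw [Real.log_div (Real.exp_ne_zero _) (ne_of_gt (hZpos s i j)), Real.log_exp]
  have hD : HasDerivAt (fun s : ℝ => -(∑ i : Fin M, ∑ j : Fin M, ∑ k'' : Fin M,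
        (N i j k'' : ℝ) * ((c i j k'' + s * u i j k'') -
          Real.log (∑ l : Fin M, Real.exp (c i j l + s * u i j l)))))
      (-(∑ i : Fin M, ∑ j : Fin M, ∑ k'' : Fin M, (N i j k'' : ℝ) *
        (u i j k'' - (∑ l : Fin M, u i j l * Real.exp (c i j l)) /
          (∑ l : Fin M, Real.exp (c i j l))))) 0 := by
    apply HasDerivAt.neg
    apply HasDerivAt.fun_sum
    intro i _
    apply HasDerivAt.fun_sum
    intro j _
    apply HasDerivAt.fun_sum
    intro k'' _
    have h1 : ∀ l, HasDerivAt (fun s : ℝ => c i j l + s * u i j l) (u i j l) 0 := by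
      intro l
      simpa using ((hasDerivAt_id (0:ℝ)).mul_const (u i j l)).const_add (c i j l)
    have hZ : HasDerivAt (fun s : ℝ => ∑ l : Fin M, Real.exp (c i j l + s * u i j l))
        (∑ l : Fin M, u i j l * Real.exp (c i j l)) 0 := by
      apply HasDerivAt.fun_sum
      intro l _
      have := (h1 l).exp
      simpa [mul_comm] using this
    have hne : (fun s : ℝ => ∑ l : Fin M, Real.exp (c i j l + s * u i j l)) 0 ≠ 0 := by
      simpa using ne_of_gt (hZpos 0 i j)
    have hlog := hZ.log hne
    have hsub := (h1 k'').sub hlog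
    have := hsub.const_mul ((N i j k'' : ℝ))
    convert this using 2
    · rfl
    · simp
    · simp
  rw [hfun, hD.deriv, ← Finset.sum_neg_distrib]
  refine Finset.sum_congr rfl fun i _ => ?_
  rw [← Finset.sum_neg_distrib]
  refine Finset.sum_congr rfl fun j _ => ?_
  have hS : (∑ l : Fin M, u i j l * Real.exp (c i j l))
      = (WM i d + WV j d) * Real.exp (c i j k') := by
    simp [huval, ite_mul]
  have hNu : (∑ k'' : Fin M, (N i j k'' : ℝ) * u i j k'')
      = (N i j k' : ℝ) * (WM i d + WV j d) := by
    simp [huval, mul_ite]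
  have hP : Phat WM WV WT i j k'
      = Real.exp (c i j k') / ∑ l : Fin M, Real.exp (c i j l) := rfl
  have hZne : (∑ l : Fin M, Real.exp (c i j l)) ≠ 0 := (hZpos0 i j).ne'
  simp only [mul_sub]
  rw [Finset.sum_sub_distrib, hNu, ← Finset.sum_mul, hS, hP]
  push_cast
  field_simp
  ring
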